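/- arXiv:1407.3556 — 6 statements merged into one kernel-verified Lean document; each statement's English description precedes it below -/
import Mathlib

section
/- For frequency-selective channels, an optimal SAPD solution must use maximum power for every user. Precisely: let p_1,…,p_n be measurable bounded PSDs on [0,W] with ∫_0^W p_i ≤ P_i for every i, and suppose there is a user k with ∫_0^W p_k(x) dx < P_k. Then there exist measurable PSDs q_1,…,q_n : [0,W] → [0,∞) with ∫_0^W q_i ≤ P_i for every i such that the weighted sum of capacities strictly increases: Σ_i ω_i C_i(q) > Σ_i ω_i C_i(p). -/
open MeasureTheory Real

/-- Capacity of user `i` when the users transmit with PSDs `p`, treating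
interference as noise: `C_i(p) = ∫_0^W log(1 + p_i(x) h_{ii}(x) / (Σ_{j≠i} p_j(x) h_{ji}(x) + N_i)) dx`.
Here `h j i x` is the channel gain from the transmitter of user `j` to the
receiver of user `i` at frequency `x`, and `N i` is the noise density of user `i`. -/
noncomputable def capacity {n : ℕ} (W : ℝ) (h : Fin n → Fin n → ℝ → ℝ)
    (N : Fin n → ℝ) (p : Fin n → ℝ → ℝ) (i : Fin n) : ℝ :=
  ∫ x in (0:ℝ)..W,
    Real.log (1 + p i x * h i i x /
      ((∑ j ∈ Finset.univ.erase i, p j x * h j i x) + N i))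

open Set

/-! Raise the PSD of user `k` by a large constant `δ` on a set `S ⊆ (0, W]` of small positive
measure on which the total power received at receiver `k` is at most `M`. On `S` user `k` gains
at least `log (1 + δ hmin / M)` per unit of bandwidth, while any other user `i` loses at most
`log (1 + pmax hmax / N i)`, because its integrand is nonnegative and bounded by that. For `δ`
large the weighted gain beats the weighted loss, and `|S| ≤ (P k - ∫ p k) / δ` keeps the boosted
profile feasible. -/

lemma exists_measure_inter_pos_of_iUnion_eq_univ {α ι : Type*} [MeasurableSpace α]
    [Countable ι] {μ : Measure α} {A : Set α} {s : ι → Set α} (hs : ⋃ i, s i = univ)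
    (hA : 0 < μ A) : ∃ i, 0 < μ (A ∩ s i) :=
  exists_measure_pos_of_not_measure_iUnion_null <| by
    rw [← inter_iUnion, hs, inter_univ]; exact hA.ne'

lemma exists_subset_volume_pos_le {A : Set ℝ} (hA : MeasurableSet A) (hpos : 0 < volume A)
    {ε : ℝ} (hε : 0 < ε) :
    ∃ S ⊆ A, MeasurableSet S ∧ 0 < volume.real S ∧ volume.real S ≤ ε := by
  obtain ⟨j, hj⟩ := exists_measure_inter_pos_of_iUnion_eq_univ (iUnion_Ioc_add_zsmul hε 0) hpos
  have hle : volume (A ∩ _) ≤ ENNReal.ofReal ε :=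
    calc volume (A ∩ _) ≤ volume (Ioc (0 + j • ε) (0 + (j + 1) • ε)) :=
          measure_mono inter_subset_right
      _ = ENNReal.ofReal ε := by
          rw [Real.volume_Ioc]; congr 1; simp only [zsmul_eq_mul]; push_cast; ring
  exact ⟨_, inter_subset_left, hA.inter measurableSet_Ioc,
    ENNReal.toReal_pos hj.ne' (ne_top_of_le_ne_top ENNReal.ofReal_ne_top hle),
    ENNReal.toReal_le_of_le_ofReal hε.le hle⟩

lemma exists_lt_mul_log_one_add_mul (L : ℝ) {ω c : ℝ} (hω : 0 < ω) (hc : 0 < c) :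
    ∃ δ > 0, L < ω * log (1 + δ * c) := by
  refine ⟨exp (L / ω) / c, by positivity, ?_⟩
  rw [div_mul_cancel₀ _ hc.ne', ← div_lt_iff₀' hω]
  calc L / ω = log (exp (L / ω)) := (log_exp _).symm
    _ < log (1 + exp (L / ω)) := log_lt_log (exp_pos _) (by linarith)

lemma setIntegral_add_mul_measureReal_le {α : Type*} [MeasurableSpace α] {μ : Measure α}
    {E S : Set α} {f g : α → ℝ} (hE : MeasurableSet E) (hS : MeasurableSet S) (hSE : S ⊆ E)
    (hSfin : μ S ≠ ⊤) (hf : IntegrableOn f E μ) (hg : IntegrableOn g E μ) {c : ℝ}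
    (hfg : ∀ x ∈ E, f x + S.indicator (fun _ => c) x ≤ g x) :
    ∫ x in E, f x ∂μ + c * μ.real S ≤ ∫ x in E, g x ∂μ := by
  have hc : IntegrableOn (S.indicator fun _ => c) E μ :=
    ((integrableOn_const hSfin).integrable_indicator hS).integrableOn
  have hint : ∫ x in E, S.indicator (fun _ => c) x ∂μ = c * μ.real S := by
    rw [integral_indicator_const c hS, measureReal_restrict_apply hS, inter_eq_left.mpr hSE,
      smul_eq_mul, mul_comm]
  rw [← hint, ← integral_add hf hc]
  exact setIntegral_mono_on (hf.add hc) hg hE hfg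

lemma log_one_add_div_add_log_one_add_div_le {D a b c M : ℝ} (hD : 0 < D) (ha : 0 ≤ a)
    (hc : 0 ≤ c) (hcb : c ≤ b) (hM : D + a ≤ M) :
    log (1 + a / D) + log (1 + c / M) ≤ log (1 + (a + b) / D) := by
  have hM0 : 0 < M := by linarith
  rw [← log_mul (by positivity) (by positivity)]
  apply log_le_log (by positivity)
  rw [one_add_div hD.ne', one_add_div hM0.ne', one_add_div hD.ne', div_mul_div_comm,
    div_le_div_iff₀ (by positivity) hD]
  nlinarith [mul_le_mul hM hcb hc hM0.le]

lemma sum_mul_lt_sum_mul_of_gain_gt_loss {ι : Type*} [Fintype ι] [DecidableEq ι]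
    {ω a b ℓ : ι → ℝ} {k : ι} {g m : ℝ} (hω : ∀ i, 0 ≤ ω i) (hm : 0 < m)
    (hk : a k + g * m ≤ b k) (hloss : ∀ i ≠ k, a i - ℓ i * m ≤ b i)
    (hgl : ∑ i ∈ Finset.univ.erase k, ω i * ℓ i < ω k * g) :
    ∑ i, ω i * a i < ∑ i, ω i * b i := by
  rw [← Finset.add_sum_erase _ _ (Finset.mem_univ k),
    ← Finset.add_sum_erase _ _ (Finset.mem_univ k)]
  have hrest : ∑ i ∈ Finset.univ.erase k, ω i * a i - (∑ i ∈ Finset.univ.erase k, ω i * ℓ i) * m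
      ≤ ∑ i ∈ Finset.univ.erase k, ω i * b i := by
    rw [Finset.sum_mul, ← Finset.sum_sub_distrib]
    exact Finset.sum_le_sum fun i hi => by
      nlinarith [mul_le_mul_of_nonneg_left (hloss i (Finset.ne_of_mem_erase hi)) (hω i)]
  nlinarith [mul_le_mul_of_nonneg_left hk (hω k), mul_lt_mul_of_pos_right hgl hm]

noncomputable def capacityDensity {n : ℕ} (h : Fin n → Fin n → ℝ → ℝ) (N : Fin n → ℝ)
    (r : Fin n → ℝ → ℝ) (i : Fin n) (x : ℝ) : ℝ :=
  log (1 + r i x * h i i x / ((∑ j ∈ Finset.univ.erase i, r j x * h j i x) + N i))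

noncomputable def receivedPower {n : ℕ} (h : Fin n → Fin n → ℝ → ℝ) (N : Fin n → ℝ)
    (r : Fin n → ℝ → ℝ) (i : Fin n) (x : ℝ) : ℝ :=
  (∑ j ∈ Finset.univ.erase i, r j x * h j i x) + N i + r i x * h i i x

structure IsBoundedPSD {n : ℕ} (r : Fin n → ℝ → ℝ) (B : ℝ) : Prop where
  measurable : ∀ i, Measurable (r i)
  nonneg : ∀ i x, 0 ≤ r i x
  le : ∀ i x, r i x ≤ B

noncomputable def boostPower {n : ℕ} (p : Fin n → ℝ → ℝ) (k : Fin n) (S : Set ℝ) (δ : ℝ) :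
    Fin n → ℝ → ℝ :=
  Function.update p k (p k + S.indicator fun _ => δ)

section

variable {n : ℕ} {h : Fin n → Fin n → ℝ → ℝ} {N : Fin n → ℝ} {r p : Fin n → ℝ → ℝ}
  {k : Fin n} {S : Set ℝ} {δ : ℝ}

lemma capacity_eq_setIntegral_capacityDensity {W : ℝ} (hW : 0 ≤ W) (i : Fin n) :
    capacity W h N r i = ∫ x in Ioc 0 W, capacityDensity h N r i x := by
  rw [capacity, intervalIntegral.integral_of_le hW]
  rfl

lemma measurable_capacityDensity (hh : ∀ j i, Measurable (h j i)) (hr : ∀ i, Measurable (r i))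
    (i : Fin n) : Measurable (capacityDensity h N r i) :=
  (measurable_const.add (((hr i).mul (hh i i)).div
    ((Finset.measurable_sum _ fun j _ => (hr j).mul (hh j i)).add measurable_const))).log

lemma interference_add_noise_pos (hh : ∀ j i x, 0 ≤ h j i x) (hN : ∀ i, 0 < N i)
    (hr : ∀ i x, 0 ≤ r i x) (i : Fin n) (x : ℝ) :
    0 < (∑ j ∈ Finset.univ.erase i, r j x * h j i x) + N i :=
  add_pos_of_nonneg_of_pos (Finset.sum_nonneg fun j _ => mul_nonneg (hr j x) (hh j i x)) (hN i)

lemma measurable_receivedPower (hh : ∀ j i, Measurable (h j i)) (hr : ∀ i, Measurable (r i))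
    (i : Fin n) : Measurable (receivedPower h N r i) :=
  ((Finset.measurable_sum _ fun j _ => (hr j).mul (hh j i)).add measurable_const).add
    ((hr i).mul (hh i i))

lemma receivedPower_pos (hh : ∀ j i x, 0 ≤ h j i x) (hN : ∀ i, 0 < N i)
    (hr : ∀ i x, 0 ≤ r i x) (i : Fin n) (x : ℝ) : 0 < receivedPower h N r i x :=
  add_pos_of_pos_of_nonneg (interference_add_noise_pos hh hN hr i x)
    (mul_nonneg (hr i x) (hh i i x))

lemma capacityDensity_nonneg (hh : ∀ j i x, 0 ≤ h j i x) (hN : ∀ i, 0 < N i)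
    (hr : ∀ i x, 0 ≤ r i x) (i : Fin n) (x : ℝ) : 0 ≤ capacityDensity h N r i x :=
  log_nonneg <| le_add_of_nonneg_right <|
    div_nonneg (mul_nonneg (hr i x) (hh i i x)) (interference_add_noise_pos hh hN hr i x).le

lemma capacityDensity_le {B hmax : ℝ} (hh : ∀ j i x, 0 ≤ h j i x) (hN : ∀ i, 0 < N i)
    (hr : ∀ i x, 0 ≤ r i x) {i : Fin n} {x : ℝ} (hrB : r i x ≤ B) (hhmax : h i i x ≤ hmax) :
    capacityDensity h N r i x ≤ log (1 + B * hmax / N i) := by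
  have hsignal : r i x * h i i x ≤ B * hmax :=
    mul_le_mul hrB hhmax (hh i i x) ((hr i x).trans hrB)
  have hI := interference_add_noise_pos hh hN hr i x
  refine log_le_log (add_pos_of_pos_of_nonneg one_pos
    (div_nonneg (mul_nonneg (hr i x) (hh i i x)) hI.le)) (add_le_add_right ?_ 1)
  exact div_le_div₀ ((mul_nonneg (hr i x) (hh i i x)).trans hsignal) hsignal (hN i)
    (le_add_of_nonneg_left (Finset.sum_nonneg fun j _ => mul_nonneg (hr j x) (hh j i x)))

lemma integrableOn_capacityDensity {B hmax : ℝ} (hhm : ∀ j i, Measurable (h j i))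
    (hh : ∀ j i x, 0 ≤ h j i x) (hN : ∀ i, 0 < N i) (hr : IsBoundedPSD r B)
    (hhmax : ∀ i x, h i i x ≤ hmax) (i : Fin n) (a b : ℝ) :
    IntegrableOn (capacityDensity h N r i) (Ioc a b) := by
  refine Integrable.of_bound (measurable_capacityDensity hhm hr.measurable i).aestronglyMeasurable
    (log (1 + B * hmax / N i)) (ae_of_all _ fun x => ?_)
  rw [norm_of_nonneg (capacityDensity_nonneg hh hN hr.nonneg i x)]
  exact capacityDensity_le hh hN hr.nonneg (hr.le i x) (hhmax i x)

lemma boostPower_of_ne {i : Fin n} (hik : i ≠ k) : boostPower p k S δ i = p i :=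
  Function.update_of_ne hik _ _

lemma boostPower_self : boostPower p k S δ k = p k + S.indicator fun _ => δ :=
  Function.update_self ..

lemma boostPower_self_apply (x : ℝ) :
    boostPower p k S δ k x = p k x + S.indicator (fun _ => δ) x :=
  congrFun boostPower_self x

lemma boostPower_apply_of_notMem {x : ℝ} (hx : x ∉ S) (i : Fin n) :
    boostPower p k S δ i x = p i x := by
  rcases eq_or_ne i k with rfl | hik
  · simp [boostPower_self_apply, hx]
  · rw [boostPower_of_ne hik]

lemma IsBoundedPSD.boostPower {B : ℝ} (hp : IsBoundedPSD p B) (hS : MeasurableSet S)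
    (hδ : 0 ≤ δ) : IsBoundedPSD (boostPower p k S δ) (B + δ) where
  measurable i := by
    rcases eq_or_ne i k with rfl | hik
    · rw [boostPower_self]; exact (hp.measurable i).add (measurable_const.indicator hS)
    · rw [boostPower_of_ne hik]; exact hp.measurable i
  nonneg i x := by
    rcases eq_or_ne i k with rfl | hik
    · rw [boostPower_self_apply]
      exact add_nonneg (hp.nonneg i x) (indicator_nonneg (fun _ _ => hδ) x)
    · rw [boostPower_of_ne hik]; exact hp.nonneg i x
  le i x := by
    rcases eq_or_ne i k with rfl | hik
    · rw [boostPower_self_apply]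
      exact add_le_add (hp.le i x) (indicator_le_self' (fun _ _ => hδ) x)
    · rw [boostPower_of_ne hik]; exact (hp.le i x).trans (le_add_of_nonneg_right hδ)

lemma IsBoundedPSD.integrableOn {B : ℝ} (hr : IsBoundedPSD r B) (i : Fin n) (a b : ℝ) :
    IntegrableOn (r i) (Ioc a b) :=
  Integrable.of_bound (hr.measurable i).aestronglyMeasurable B <| ae_of_all _ fun x => by
    rw [norm_of_nonneg (hr.nonneg i x)]; exact hr.le i x

lemma capacityDensity_add_log_le_boostPower {hmin M : ℝ} (hh : ∀ j i x, 0 ≤ h j i x)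
    (hN : ∀ i, 0 < N i) (hp : ∀ i x, 0 ≤ p i x) (hδ : 0 ≤ δ) (hhmin : 0 ≤ hmin) {x : ℝ}
    (hx : x ∈ S) (hmin_le : hmin ≤ h k k x)
    (hM : receivedPower h N p k x ≤ M) :
    capacityDensity h N p k x + log (1 + δ * hmin / M) ≤
      capacityDensity h N (boostPower p k S δ) k x := by
  have hI : ∑ j ∈ Finset.univ.erase k, boostPower p k S δ j x * h j k x =
      ∑ j ∈ Finset.univ.erase k, p j x * h j k x :=
    Finset.sum_congr rfl fun j hj => by rw [boostPower_of_ne (Finset.ne_of_mem_erase hj)]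
  have hpk : boostPower p k S δ k x = p k x + δ := by
    rw [boostPower_self_apply, indicator_of_mem hx]
  rw [capacityDensity, capacityDensity, hI, hpk, add_mul]
  exact log_one_add_div_add_log_one_add_div_le (interference_add_noise_pos hh hN hp k x)
    (mul_nonneg (hp k x) (hh k k x)) (mul_nonneg hδ hhmin)
    (mul_le_mul_of_nonneg_left hmin_le hδ) hM

variable {W : ℝ}

lemma capacity_add_le_capacity_boostPower {B hmax hmin M : ℝ} (hW : 0 ≤ W)
    (hhm : ∀ j i, Measurable (h j i)) (hh : ∀ j i x, 0 ≤ h j i x) (hN : ∀ i, 0 < N i)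
    (hhmax : ∀ i x, h i i x ≤ hmax) (hp : IsBoundedPSD p B) (hS : MeasurableSet S)
    (hSW : S ⊆ Ioc 0 W) (hδ : 0 ≤ δ) (hhmin : 0 ≤ hmin) (hmin_le : ∀ x ∈ S, hmin ≤ h k k x)
    (hM : ∀ x ∈ S, receivedPower h N p k x ≤ M) :
    capacity W h N p k + log (1 + δ * hmin / M) * volume.real S ≤
      capacity W h N (boostPower p k S δ) k := by
  rw [capacity_eq_setIntegral_capacityDensity hW, capacity_eq_setIntegral_capacityDensity hW]
  refine setIntegral_add_mul_measureReal_le measurableSet_Ioc hS hSW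
    (measure_mono hSW |>.trans_lt measure_Ioc_lt_top).ne
    (integrableOn_capacityDensity hhm hh hN hp hhmax k 0 W)
    (integrableOn_capacityDensity hhm hh hN (hp.boostPower hS hδ) hhmax k 0 W) fun x _ => ?_
  by_cases hx : x ∈ S
  · rw [indicator_of_mem hx]
    exact capacityDensity_add_log_le_boostPower hh hN hp.nonneg hδ hhmin hx (hmin_le x hx)
      (hM x hx)
  · rw [indicator_of_notMem hx, add_zero]
    simp only [capacityDensity, boostPower_apply_of_notMem hx, le_refl]

lemma capacity_sub_le_capacity_of_eq_off {q : Fin n → ℝ → ℝ} {B B' hmax : ℝ} (hW : 0 ≤ W)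
    (hhm : ∀ j i, Measurable (h j i)) (hh : ∀ j i x, 0 ≤ h j i x) (hN : ∀ i, 0 < N i)
    (hhmax : ∀ i x, h i i x ≤ hmax) (hp : IsBoundedPSD p B) (hq : IsBoundedPSD q B')
    (hS : MeasurableSet S) (hSW : S ⊆ Ioc 0 W) (hpq : ∀ x ∉ S, ∀ j, q j x = p j x)
    (i : Fin n) :
    capacity W h N p i - log (1 + B * hmax / N i) * volume.real S ≤ capacity W h N q i := by
  rw [capacity_eq_setIntegral_capacityDensity hW, capacity_eq_setIntegral_capacityDensity hW,
    sub_eq_add_neg, ← neg_mul]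
  refine setIntegral_add_mul_measureReal_le measurableSet_Ioc hS hSW
    (measure_mono hSW |>.trans_lt measure_Ioc_lt_top).ne
    (integrableOn_capacityDensity hhm hh hN hp hhmax i 0 W)
    (integrableOn_capacityDensity hhm hh hN hq hhmax i 0 W) fun x _ => ?_
  by_cases hx : x ∈ S
  · rw [indicator_of_mem hx]
    linarith [capacityDensity_le hh hN hp.nonneg (hp.le i x) (hhmax i x),
      capacityDensity_nonneg hh hN hq.nonneg i x]
  · rw [indicator_of_notMem hx, add_zero]
    simp only [capacityDensity, hpq x hx, le_refl]

lemma intervalIntegral_boostPower_self {B : ℝ} (hW : 0 ≤ W) (hp : IsBoundedPSD p B)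
    (hS : MeasurableSet S) (hSW : S ⊆ Ioc 0 W) :
    ∫ x in 0..W, boostPower p k S δ k x = (∫ x in 0..W, p k x) + δ * volume.real S := by
  have hfin : volume S ≠ ⊤ := (measure_mono hSW |>.trans_lt measure_Ioc_lt_top).ne
  simp only [intervalIntegral.integral_of_le hW, boostPower_self_apply]
  rw [integral_add (hp.integrableOn k 0 W)
      ((integrableOn_const hfin).integrable_indicator hS).integrableOn,
    integral_indicator_const δ hS, measureReal_restrict_apply hS, inter_eq_left.mpr hSW,
    smul_eq_mul, mul_comm δ]

end

theorem max_power_weighted_sum_general {n : ℕ} (W : ℝ) (hW : 0 < W)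
    (h : Fin n → Fin n → ℝ → ℝ)
    (hmeas : ∀ j i, Measurable (h j i))
    (hnn : ∀ j i x, 0 ≤ h j i x)
    (N P ω : Fin n → ℝ)
    (hN : ∀ i, 0 < N i) (hω : ∀ i, 0 < ω i)
    (pmax hmax hmin : ℝ)
    (p : Fin n → ℝ → ℝ)
    (hpmeas : ∀ i, Measurable (p i))
    (hpnn : ∀ i x, 0 ≤ p i x)
    (hpbd : ∀ i x, p i x ≤ pmax)
    (hhbd : ∀ i x, h i i x ≤ hmax)
    (k : Fin n)
    (hhmin : 0 < hmin)
    (hkmin : ∀ x ∈ Set.Icc (0:ℝ) W, hmin ≤ h k k x)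
    (hfeas : ∀ i, (∫ x in (0:ℝ)..W, p i x) ≤ P i)
    (hslack : (∫ x in (0:ℝ)..W, p k x) < P k) :
    ∃ q : Fin n → ℝ → ℝ,
      (∀ i, Measurable (q i)) ∧
      (∀ i x, 0 ≤ q i x) ∧
      (∀ i, (∫ x in (0:ℝ)..W, q i x) ≤ P i) ∧
      ∑ i, ω i * capacity W h N q i > ∑ i, ω i * capacity W h N p i := by
  have hp : IsBoundedPSD p pmax := ⟨hpmeas, hpnn, hpbd⟩
  obtain ⟨M, hM⟩ := exists_measure_inter_pos_of_iUnion_eq_univ (μ := volume) (A := Ioc 0 W)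
    (s := fun M : ℕ => receivedPower h N p k ⁻¹' Iic (M : ℝ))
    (eq_univ_of_forall fun x => mem_iUnion.2 (exists_nat_ge (receivedPower h N p k x)))
    (by simpa using hW)
  have hM0 : (0 : ℝ) < M := by
    obtain ⟨x, -, hx⟩ := nonempty_of_measure_ne_zero hM.ne'
    exact (receivedPower_pos hnn hN hpnn k x).trans_le hx
  obtain ⟨δ, hδ, hgain_gt_loss⟩ := exists_lt_mul_log_one_add_mul
    (∑ i ∈ Finset.univ.erase k, ω i * log (1 + pmax * hmax / N i)) (hω k) (div_pos hhmin hM0)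
  obtain ⟨S, hSA, hS, hSpos, hSle⟩ := exists_subset_volume_pos_le
    (measurableSet_Ioc.inter (measurable_receivedPower hmeas hpmeas k measurableSet_Iic)) hM
    (div_pos (sub_pos.2 hslack) hδ)
  have hSW : S ⊆ Ioc 0 W := hSA.trans inter_subset_left
  have hq := hp.boostPower (k := k) hS hδ.le
  refine ⟨boostPower p k S δ, hq.measurable, hq.nonneg, fun i => ?_, ?_⟩
  · rcases eq_or_ne i k with rfl | hik
    · rw [intervalIntegral_boostPower_self hW.le hp hS hSW]
      linarith [(le_div_iff₀' hδ).1 hSle]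
    · rw [boostPower_of_ne hik]
      exact hfeas i
  · refine sum_mul_lt_sum_mul_of_gain_gt_loss (fun i => (hω i).le) hSpos
      (capacity_add_le_capacity_boostPower hW.le hmeas hnn hN hhbd hp hS hSW hδ.le hhmin.le
        (fun x hx => hkmin x (Ioc_subset_Icc_self (hSW hx))) (fun x hx => (hSA hx).2))
      (fun i _ => capacity_sub_le_capacity_of_eq_off hW.le hmeas hnn hN hhbd hp hq hS hSW
        (fun x hx _ => boostPower_apply_of_notMem hx _) i) ?_
    rw [mul_div_assoc]
    exact hgain_gt_loss

/-- any feasible PSD profile in which some user `k` does not use its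
maximum power can be strictly improved (in weighted sum of capacities) by another
feasible PSD profile. -/
theorem max_power_weighted_sum {n : ℕ} (W : ℝ) (hW : 0 < W)
    (h : Fin n → Fin n → ℝ → ℝ)
    (hmeas : ∀ j i, Measurable (h j i))
    (hnn : ∀ j i x, 0 ≤ h j i x)
    (N P ω : Fin n → ℝ)
    (hN : ∀ i, 0 < N i) (hP : ∀ i, 0 < P i) (hω : ∀ i, 0 < ω i)
    (pmax hmax hmin : ℝ)
    (p : Fin n → ℝ → ℝ)
    (hpmeas : ∀ i, Measurable (p i))
    (hpnn : ∀ i x, 0 ≤ p i x)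
    (hpbd : ∀ i x, p i x ≤ pmax)
    (hhbd : ∀ i x, h i i x ≤ hmax)
    (hph : 0 < pmax * hmax)
    (k : Fin n)
    (hhmin : 0 < hmin)
    (hkmin : ∀ x ∈ Set.Icc (0:ℝ) W, hmin ≤ h k k x)
    (hfeas : ∀ i, (∫ x in (0:ℝ)..W, p i x) ≤ P i)
    (hslack : (∫ x in (0:ℝ)..W, p k x) < P k) :
    ∃ q : Fin n → ℝ → ℝ,
      (∀ i, Measurable (q i)) ∧
      (∀ i x, 0 ≤ q i x) ∧
      (∀ i, (∫ x in (0:ℝ)..W, q i x) ≤ P i) ∧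
      ∑ i, ω i * capacity W h N q i > ∑ i, ω i * capacity W h N p i :=
  max_power_weighted_sum_general W hW h hmeas hnn N P ω hN hω pmax hmax hmin p hpmeas hpnn hpbd hhbd
    k hhmin hkmin hfeas hslack
end

section
/- For the SAPD problem whose objective is the weighted product of user capacities, an optimal solution must use maximum power for every user. Precisely: let p_1,…,p_n be measurable bounded PSDs on [0,W] with ∫_0^W p_i ≤ P_i and C_i(p) > 0 for every i, and suppose there is a user k with ∫_0^W p_k(x) dx < P_k. Then there exist measurable PSDs q_1,…,q_n : [0,W] → [0,∞) with ∫_0^W q_i ≤ P_i for every i such that the weighted product of capacities strictly increases: Π_i ω_i C_i(q) > Π_i ω_i C_i(p). -/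
/-!
If user `k` has spare power `δ`, it can pour all of it onto a set `S` of measure `ε` on which the
interference it receives stays below a fixed bound `M`. Off `S` nothing changes, so every other
user loses at most `B ε`, where `B` bounds the rate densities, while user `k` gains at least
`ε (log (1 + δ hmin / (ε (M + N k))) - B)`, which is of order `ε log (1 / ε)`. For small `ε` the
relative gain of user `k` beats the total relative loss of the others, so the weighted product
of the capacities increases.
-/

open MeasureTheory Real

open Set Filter Topology

lemma exists_measure_inter_setOf_le_ne_zero {α : Type*} [MeasurableSpace α] {μ : Measure α}
    {s : Set α} (hs : μ s ≠ 0) (f : α → ℝ) : ∃ M : ℕ, μ (s ∩ {x | f x ≤ M}) ≠ 0 := by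
  have hcover : ⋃ M : ℕ, s ∩ {x | f x ≤ M} = s := by
    rw [← inter_iUnion, inter_eq_left]
    exact fun x _ => mem_iUnion.2 ⟨⌈f x⌉₊, Nat.le_ceil (f x)⟩
  obtain ⟨M, hM⟩ := exists_measure_pos_of_not_measure_iUnion_null (hcover ▸ hs)
  exact ⟨M, hM.ne'⟩

-- `A` meets one of the intervals `[z u/2, (z+1) u/2)` in a set of positive measure.
lemma exists_subset_volume_real_pos_lt {A : Set ℝ} (hA : MeasurableSet A) (hA0 : volume A ≠ 0)
    {u : ℝ} (hu : 0 < u) :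
    ∃ S ⊆ A, MeasurableSet S ∧ 0 < volume.real S ∧ volume.real S < u := by
  have hcover : ⋃ z : ℤ, A ∩ Ico (z • (u / 2)) ((z + 1) • (u / 2)) = A := by
    rw [← inter_iUnion, iUnion_Ico_zsmul (half_pos hu), inter_univ]
  obtain ⟨z, hz⟩ := exists_measure_pos_of_not_measure_iUnion_null (hcover ▸ hA0)
  have hle : volume (A ∩ Ico (z • (u / 2)) ((z + 1) • (u / 2))) ≤ ENNReal.ofReal (u / 2) := by
    refine (measure_mono inter_subset_right).trans_eq ?_
    rw [Real.volume_Ico, add_smul, one_smul, add_sub_cancel_left]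
  refine ⟨_, inter_subset_left, hA.inter measurableSet_Ico,
    ENNReal.toReal_pos hz.ne' (ne_top_of_le_ne_top ENNReal.ofReal_ne_top hle), ?_⟩
  calc volume.real _ ≤ u / 2 := ENNReal.toReal_le_of_le_ofReal (half_pos hu).le hle
    _ < u := half_lt_self hu

lemma exists_subset_volume_real_of_eventually {A : Set ℝ} (hA : MeasurableSet A)
    (hA0 : volume A ≠ 0) {P : ℝ → Prop} (hP : ∀ᶠ ε in 𝓝[>] 0, P ε) :
    ∃ S ⊆ A, MeasurableSet S ∧ 0 < volume.real S ∧ P (volume.real S) := by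
  obtain ⟨u, hu, huP⟩ := mem_nhdsGT_iff_exists_Ioo_subset.1 hP
  obtain ⟨S, hSA, hS, hS0, hSu⟩ := exists_subset_volume_real_pos_lt hA hA0 hu
  exact ⟨S, hSA, hS, hS0, huP ⟨hS0, hSu⟩⟩

lemma setIntegral_sub_setIntegral_le {α : Type*} [MeasurableSpace α] {μ : Measure α}
    {s S : Set α} {u v : α → ℝ} {D : ℝ} (hS : MeasurableSet S) (hSs : S ⊆ s) (hSμ : μ S ≠ ⊤)
    (hu : IntegrableOn u s μ) (hv : IntegrableOn v s μ) (huv : EqOn u v (s \ S))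
    (hD : ∀ x ∈ S, u x - v x ≤ D) :
    ∫ x in s, u x ∂μ - ∫ x in s, v x ∂μ ≤ D * μ.real S := by
  rw [← integral_sub hu hv, ← integral_inter_add_sdiff (f := fun x => u x - v x) hS (hu.sub hv),
    inter_eq_right.2 hSs,
    setIntegral_eq_zero_of_forall_eq_zero fun x hx => sub_eq_zero.2 (huv hx), add_zero]
  calc ∫ x in S, u x - v x ∂μ ≤ ∫ _ in S, D ∂μ :=
        setIntegral_mono_on ((hu.sub hv).mono_set hSs) (integrableOn_const hSμ) hS hD
    _ = D * μ.real S := by rw [setIntegral_const, smul_eq_mul, mul_comm]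

lemma tendsto_log_one_add_div_nhdsGT_zero {β : ℝ} (hβ : 0 < β) :
    Tendsto (fun ε => log (1 + β / ε)) (𝓝[>] 0) atTop := by
  simp only [div_eq_mul_inv]
  exact tendsto_log_atTop.comp
    (tendsto_atTop_add_const_left _ 1 (tendsto_inv_nhdsGT_zero.const_mul_atTop hβ))

section Products

variable {ι : Type*}

lemma one_sub_card_mul_div_mul_prod_le_prod {s : Finset ι} {a b : ι → ℝ} {m η : ℝ} (hm : 0 < m)
    (hma : ∀ i ∈ s, m ≤ a i) (hb : ∀ i ∈ s, a i - η ≤ b i) (hη : 0 ≤ η) (hηm : η ≤ m) :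
    (1 - s.card * (η / m)) * ∏ i ∈ s, a i ≤ ∏ i ∈ s, b i := by
  have hηm' : η / m ≤ 1 := (div_le_one hm).2 hηm
  calc (1 - s.card * (η / m)) * ∏ i ∈ s, a i
      ≤ (1 - η / m) ^ s.card * ∏ i ∈ s, a i := by
        gcongr
        · exact Finset.prod_nonneg fun i hi => hm.le.trans (hma i hi)
        · simpa [sub_eq_add_neg] using one_add_mul_le_pow (a := -(η / m)) (by linarith) s.card
    _ = ∏ i ∈ s, (1 - η / m) * a i := by rw [Finset.prod_mul_distrib, Finset.prod_const]
    _ ≤ ∏ i ∈ s, b i := by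
        refine Finset.prod_le_prod (fun i hi => ?_) (fun i hi => ?_)
        · exact mul_nonneg (by linarith) (hm.le.trans (hma i hi))
        · have : η ≤ η / m * a i := by
            rw [div_mul_eq_mul_div, le_div_iff₀ hm]; exact mul_le_mul_of_nonneg_left (hma i hi) hη
          linarith [hb i hi]

lemma prod_lt_prod_of_sub_le_of_add_le [Fintype ι] [DecidableEq ι] {a b : ι → ℝ} {k : ι}
    {m η Δ : ℝ} (hm : 0 < m) (hma : ∀ i, m ≤ a i) (hb : ∀ i ≠ k, a i - η ≤ b i)
    (hbk : a k + Δ ≤ b k) (hη : 0 ≤ η) (hηm : 2 * Fintype.card ι * η ≤ m)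
    (hΔ : 2 * Fintype.card ι * η * a k < m * Δ) :
    ∏ i, a i < ∏ i, b i := by
  set t := Fintype.card ι * (η / m)
  have hak : 0 < a k := hm.trans_le (hma k)
  have ht0 : 0 ≤ t := by positivity
  have ht : 2 * t ≤ 1 := by
    rw [show 2 * t = 2 * Fintype.card ι * η / m by ring, div_le_one hm]; exact hηm
  have htΔ : 2 * t * a k < Δ := by
    rw [show 2 * t * a k = 2 * Fintype.card ι * η * a k / m by ring, div_lt_iff₀' hm]; exact hΔ
  have hkey : a k < (1 - t) * b k := by
    nlinarith [mul_le_mul_of_nonneg_left hbk (by linarith : (0 : ℝ) ≤ 1 - t),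
      mul_nonneg (mul_nonneg ht0 hak.le) (by linarith : (0 : ℝ) ≤ 1 - 2 * t)]
  have hrest : (1 - t) * ∏ i ∈ Finset.univ.erase k, a i ≤ ∏ i ∈ Finset.univ.erase k, b i := by
    refine le_trans ?_ (one_sub_card_mul_div_mul_prod_le_prod hm (fun i _ => hma i)
      (fun i hi => hb i (Finset.ne_of_mem_erase hi)) hη ?_)
    · have : ((Finset.univ.erase k).card : ℝ) ≤ Fintype.card ι := by
        exact_mod_cast Finset.card_le_univ _
      gcongr
      · exact Finset.prod_nonneg fun i _ => hm.le.trans (hma i)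
      · exact mul_le_mul_of_nonneg_right this (by positivity)
    · nlinarith [show (1 : ℝ) ≤ Fintype.card ι by exact_mod_cast Fintype.card_pos_iff.2 ⟨k⟩]
  rw [← Finset.mul_prod_erase _ _ (Finset.mem_univ k),
    ← Finset.mul_prod_erase _ _ (Finset.mem_univ k)]
  calc a k * ∏ i ∈ Finset.univ.erase k, a i
      < (1 - t) * b k * ∏ i ∈ Finset.univ.erase k, a i :=
        mul_lt_mul_of_pos_right hkey (Finset.prod_pos fun i _ => hm.trans_le (hma i))
    _ = b k * ((1 - t) * ∏ i ∈ Finset.univ.erase k, a i) := by ring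
    _ ≤ b k * ∏ i ∈ Finset.univ.erase k, b i := by
        gcongr
        nlinarith [mul_nonneg ht0 hak.le]

end Products

lemma log_one_add_div_le_log_one_add_div {a a' d d' : ℝ} (ha : 0 ≤ a) (haa' : a ≤ a')
    (hd' : 0 < d') (hd'd : d' ≤ d) : log (1 + a / d) ≤ log (1 + a' / d') := by
  have hd : 0 < d := hd'.trans_le hd'd
  exact log_le_log (by positivity) (by gcongr; linarith)

section Channel

variable {n : ℕ} {h : Fin n → Fin n → ℝ → ℝ} {N : Fin n → ℝ} {p : Fin n → ℝ → ℝ}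

variable (h) in
def interference (p : Fin n → ℝ → ℝ) (i : Fin n) (x : ℝ) : ℝ :=
  ∑ j ∈ Finset.univ.erase i, p j x * h j i x

variable (h N) in
noncomputable def rateDensity (p : Fin n → ℝ → ℝ) (i : Fin n) (x : ℝ) : ℝ :=
  log (1 + p i x * h i i x / (interference h p i x + N i))

lemma capacity_eq_setIntegral {W : ℝ} (hW : 0 ≤ W) (p : Fin n → ℝ → ℝ) (i : Fin n) :
    capacity W h N p i = ∫ x in Ioc 0 W, rateDensity h N p i x :=
  intervalIntegral.integral_of_le hW

lemma interference_nonneg (hnn : ∀ j i x, 0 ≤ h j i x) (hp : ∀ j x, 0 ≤ p j x) (i : Fin n)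
    (x : ℝ) : 0 ≤ interference h p i x :=
  Finset.sum_nonneg fun j _ => mul_nonneg (hp j x) (hnn j i x)

lemma rateDensity_nonneg (hnn : ∀ j i x, 0 ≤ h j i x) (hN : ∀ i, 0 < N i)
    (hp : ∀ j x, 0 ≤ p j x) (i : Fin n) (x : ℝ) : 0 ≤ rateDensity h N p i x :=
  log_nonneg (le_add_of_nonneg_right (div_nonneg (mul_nonneg (hp i x) (hnn i i x))
    (add_nonneg (interference_nonneg hnn hp i x) (hN i).le)))

lemma rateDensity_le_log (hnn : ∀ j i x, 0 ≤ h j i x) (hN : ∀ i, 0 < N i)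
    (hp : ∀ j x, 0 ≤ p j x) {i : Fin n} {x C : ℝ} (hC : p i x * h i i x ≤ C) :
    rateDensity h N p i x ≤ log (1 + C / N i) :=
  log_one_add_div_le_log_one_add_div (mul_nonneg (hp i x) (hnn i i x)) hC (hN i)
    (le_add_of_nonneg_left (interference_nonneg hnn hp i x))

lemma log_le_rateDensity (hnn : ∀ j i x, 0 ≤ h j i x) (hN : ∀ i, 0 < N i)
    (hp : ∀ j x, 0 ≤ p j x) {i : Fin n} {x c M : ℝ} (hc : 0 ≤ c) (hcp : c ≤ p i x * h i i x)
    (hM : interference h p i x ≤ M) :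
    log (1 + c / (M + N i)) ≤ rateDensity h N p i x :=
  log_one_add_div_le_log_one_add_div hc hcp
    (add_pos_of_nonneg_of_pos (interference_nonneg hnn hp i x) (hN i)) (by linarith)

lemma measurable_interference (hmeas : ∀ j i, Measurable (h j i)) (hp : ∀ j, Measurable (p j))
    (i : Fin n) : Measurable (interference h p i) := by
  unfold interference
  fun_prop

lemma measurable_rateDensity (hmeas : ∀ j i, Measurable (h j i)) (hp : ∀ j, Measurable (p j))
    (i : Fin n) : Measurable (rateDensity h N p i) := by
  have := measurable_interference hmeas hp i
  unfold rateDensity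
  fun_prop

lemma exists_forall_rateDensity_le (hnn : ∀ j i x, 0 ≤ h j i x) (hN : ∀ i, 0 < N i)
    (hp : ∀ j x, 0 ≤ p j x) {pmax hmax : ℝ} (hpmax : ∀ j x, p j x ≤ pmax)
    (hhmax : ∀ j x, h j j x ≤ hmax) : ∃ B, ∀ i x, rateDensity h N p i x ≤ B := by
  obtain ⟨B, hB⟩ := Finite.exists_le fun i => log (1 + pmax * hmax / N i)
  refine ⟨B, fun i x => (rateDensity_le_log hnn hN hp ?_).trans (hB i)⟩
  exact mul_le_mul (hpmax i x) (hhmax i x) (hnn i i x) ((hp i x).trans (hpmax i x))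

lemma integrableOn_rateDensity {s : Set ℝ} (hs : volume s ≠ ⊤)
    (hmeas : ∀ j i, Measurable (h j i)) (hnn : ∀ j i x, 0 ≤ h j i x) (hN : ∀ i, 0 < N i)
    (hpm : ∀ j, Measurable (p j)) (hp : ∀ j x, 0 ≤ p j x) {i : Fin n} {B : ℝ}
    (hB : ∀ x, rateDensity h N p i x ≤ B) : IntegrableOn (rateDensity h N p i) s := by
  refine Integrable.mono' (integrableOn_const (C := B) hs)
    (measurable_rateDensity hmeas hpm i).aestronglyMeasurable (ae_of_all _ fun x => ?_)
  rw [Real.norm_of_nonneg (rateDensity_nonneg hnn hN hp i x)]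
  exact hB x

end Channel

section Boost

variable {n : ℕ} {h : Fin n → Fin n → ℝ → ℝ} {N : Fin n → ℝ} {p : Fin n → ℝ → ℝ} {k : Fin n}
  {S : Set ℝ} {c : ℝ}

noncomputable def boost (p : Fin n → ℝ → ℝ) (k : Fin n) (S : Set ℝ) (c : ℝ) :
    Fin n → ℝ → ℝ :=
  Function.update p k (p k + S.indicator fun _ => c)

lemma boost_self : boost p k S c k = p k + S.indicator fun _ => c :=
  Function.update_self ..

lemma boost_of_ne {j : Fin n} (hj : j ≠ k) : boost p k S c j = p j :=
  Function.update_of_ne hj ..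

lemma boost_of_notMem {x : ℝ} (hx : x ∉ S) (j : Fin n) : boost p k S c j x = p j x := by
  rcases eq_or_ne j k with rfl | hj
  · simp [boost_self, indicator_of_notMem hx]
  · rw [boost_of_ne hj]

lemma le_boost (hc : 0 ≤ c) (j : Fin n) (x : ℝ) : p j x ≤ boost p k S c j x := by
  rcases eq_or_ne j k with rfl | hj
  · simpa [boost_self] using indicator_nonneg (fun _ _ => hc) x
  · rw [boost_of_ne hj]

lemma boost_le (hc : 0 ≤ c) (j : Fin n) (x : ℝ) : boost p k S c j x ≤ p j x + c := by
  rcases eq_or_ne j k with rfl | hj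
  · simpa [boost_self] using indicator_le_self' (fun _ _ => hc) x
  · rw [boost_of_ne hj]; linarith

lemma measurable_boost (hp : ∀ j, Measurable (p j)) (hS : MeasurableSet S) (j : Fin n) :
    Measurable (boost p k S c j) := by
  rcases eq_or_ne j k with rfl | hj
  · rw [boost_self]; exact (hp j).add (measurable_const.indicator hS)
  · rw [boost_of_ne hj]; exact hp j

lemma interference_boost_self : interference h (boost p k S c) k = interference h p k := by
  funext x
  exact Finset.sum_congr rfl fun j hj => by rw [boost_of_ne (Finset.ne_of_mem_erase hj)]

lemma integral_boost_self {W : ℝ} (hW : 0 ≤ W) (hS : MeasurableSet S) (hSW : S ⊆ Ioc 0 W)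
    (hp : IntegrableOn (p k) (Ioc 0 W)) :
    ∫ x in (0 : ℝ)..W, boost p k S c k x = (∫ x in (0 : ℝ)..W, p k x) + c * volume.real S := by
  rw [intervalIntegral.integral_of_le hW, intervalIntegral.integral_of_le hW, boost_self]
  simp only [Pi.add_apply]
  rw [integral_add hp ((integrableOn_const (by simp)).indicator hS), setIntegral_indicator hS,
    inter_eq_right.2 hSW, setIntegral_const, smul_eq_mul, mul_comm]

lemma capacity_sub_capacity_boost_le {W pmax hmax D : ℝ} (hW : 0 ≤ W)
    (hmeas : ∀ j i, Measurable (h j i)) (hnn : ∀ j i x, 0 ≤ h j i x) (hN : ∀ i, 0 < N i)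
    (hpm : ∀ j, Measurable (p j)) (hp : ∀ j x, 0 ≤ p j x) (hpmax : ∀ j x, p j x ≤ pmax)
    (hhmax : ∀ j x, h j j x ≤ hmax) (hS : MeasurableSet S) (hSW : S ⊆ Ioc 0 W) (hc : 0 ≤ c)
    {i : Fin n} (hD : ∀ x ∈ S, rateDensity h N p i x - rateDensity h N (boost p k S c) i x ≤ D) :
    capacity W h N p i - capacity W h N (boost p k S c) i ≤ D * volume.real S := by
  have hq : ∀ j x, 0 ≤ boost p k S c j x := fun j x => (hp j x).trans (le_boost hc j x)
  obtain ⟨Bp, hBp⟩ := exists_forall_rateDensity_le hnn hN hp hpmax hhmax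
  obtain ⟨Bq, hBq⟩ := exists_forall_rateDensity_le hnn hN hq
    (fun j x => (boost_le hc j x).trans (add_le_add_left (hpmax j x) c)) hhmax
  rw [capacity_eq_setIntegral hW, capacity_eq_setIntegral hW]
  refine setIntegral_sub_setIntegral_le hS hSW ?_
    (integrableOn_rateDensity (by simp) hmeas hnn hN hpm hp (hBp i))
    (integrableOn_rateDensity (by simp) hmeas hnn hN (measurable_boost hpm hS) hq (hBq i))
    (fun x hx => ?_) hD
  · exact ne_top_of_le_ne_top (by simp) (measure_mono hSW)
  · simp only [rateDensity, interference, boost_of_notMem hx.2]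

lemma log_le_rateDensity_boost_self (hnn : ∀ j i x, 0 ≤ h j i x) (hN : ∀ i, 0 < N i)
    (hp : ∀ j x, 0 ≤ p j x) (hc : 0 ≤ c) {hmin M x : ℝ} (hmin0 : 0 ≤ hmin)
    (hhmin : hmin ≤ h k k x) (hx : x ∈ S) (hM : interference h p k x ≤ M) :
    log (1 + c * hmin / (M + N k)) ≤ rateDensity h N (boost p k S c) k x := by
  refine log_le_rateDensity hnn hN (fun j x => (hp j x).trans (le_boost hc j x))
    (mul_nonneg hc hmin0) ?_ (by rwa [interference_boost_self])
  rw [boost_self, Pi.add_apply, indicator_of_mem hx]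
  exact mul_le_mul (by linarith [hp k x]) hhmin hmin0 (by linarith [hp k x])

lemma capacity_sub_le_capacity_boost {W pmax hmax B : ℝ} (hW : 0 ≤ W)
    (hmeas : ∀ j i, Measurable (h j i)) (hnn : ∀ j i x, 0 ≤ h j i x) (hN : ∀ i, 0 < N i)
    (hpm : ∀ j, Measurable (p j)) (hp : ∀ j x, 0 ≤ p j x) (hpmax : ∀ j x, p j x ≤ pmax)
    (hhmax : ∀ j x, h j j x ≤ hmax) (hS : MeasurableSet S) (hSW : S ⊆ Ioc 0 W) (hc : 0 ≤ c)
    {i : Fin n} (hB : ∀ x, rateDensity h N p i x ≤ B) :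
    capacity W h N p i - B * volume.real S ≤ capacity W h N (boost p k S c) i := by
  have hq : ∀ j x, 0 ≤ boost p k S c j x := fun j x => (hp j x).trans (le_boost hc j x)
  have := capacity_sub_capacity_boost_le hW hmeas hnn hN hpm hp hpmax hhmax hS hSW hc
    (D := B) fun x _ => by linarith [hB x, rateDensity_nonneg hnn hN hq i x]
  linarith

lemma capacity_add_le_capacity_boost_self {W pmax hmax hmin M B : ℝ} (hW : 0 ≤ W)
    (hmeas : ∀ j i, Measurable (h j i)) (hnn : ∀ j i x, 0 ≤ h j i x) (hN : ∀ i, 0 < N i)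
    (hpm : ∀ j, Measurable (p j)) (hp : ∀ j x, 0 ≤ p j x) (hpmax : ∀ j x, p j x ≤ pmax)
    (hhmax : ∀ j x, h j j x ≤ hmax) (hS : MeasurableSet S) (hSW : S ⊆ Ioc 0 W) (hc : 0 ≤ c)
    (hmin0 : 0 ≤ hmin) (hhmin : ∀ x, hmin ≤ h k k x) (hM : ∀ x ∈ S, interference h p k x ≤ M)
    (hB : ∀ x, rateDensity h N p k x ≤ B) :
    capacity W h N p k + (log (1 + c * hmin / (M + N k)) - B) * volume.real S ≤
      capacity W h N (boost p k S c) k := by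
  have := capacity_sub_capacity_boost_le hW hmeas hnn hN hpm hp hpmax hhmax hS hSW hc
    (D := B - log (1 + c * hmin / (M + N k))) fun x hx =>
      sub_le_sub (hB x) (log_le_rateDensity_boost_self hnn hN hp hc hmin0 (hhmin x) hx (hM x hx))
  linear_combination this

end Boost

theorem max_power_weighted_product_general {n : ℕ} (W : ℝ) (hW : 0 < W)
    (h : Fin n → Fin n → ℝ → ℝ)
    (hmeas : ∀ j i, Measurable (h j i))
    (hnn : ∀ j i x, 0 ≤ h j i x)
    (N P ω : Fin n → ℝ)
    (hN : ∀ i, 0 < N i) (hω : ∀ i, 0 < ω i)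
    (pmax hmax hmin : ℝ)
    (hhmin : 0 < hmin)
    (hgain : ∀ (i : Fin n) (x : ℝ), hmin ≤ h i i x ∧ h i i x ≤ hmax)
    (p : Fin n → ℝ → ℝ)
    (hpmeas : ∀ i, Measurable (p i))
    (hpnn : ∀ i x, 0 ≤ p i x)
    (hpbd : ∀ i x, p i x ≤ pmax)
    (hCpos : ∀ i, 0 < capacity W h N p i)
    (k : Fin n)
    (hfeas : ∀ i, (∫ x in (0:ℝ)..W, p i x) ≤ P i)
    (hslack : (∫ x in (0:ℝ)..W, p k x) < P k) :
    ∃ q : Fin n → ℝ → ℝ,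
      (∀ i, Measurable (q i)) ∧
      (∀ i x, 0 ≤ q i x) ∧
      (∀ i, (∫ x in (0:ℝ)..W, q i x) ≤ P i) ∧
      ∏ i, ω i * capacity W h N q i > ∏ i, ω i * capacity W h N p i := by
  have hhmax : ∀ j x, h j j x ≤ hmax := fun j x => (hgain j x).2
  obtain ⟨B, hB⟩ := exists_forall_rateDensity_le hnn hN hpnn hpbd hhmax
  have hB0 : 0 ≤ B := (rateDensity_nonneg hnn hN hpnn k 0).trans (hB k 0)
  have : Nonempty (Fin n) := ⟨k⟩
  obtain ⟨i₀, hi₀⟩ := Finite.exists_min (capacity W h N p)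
  set m := capacity W h N p i₀
  set δ := P k - ∫ x in (0:ℝ)..W, p k x
  have hδ : 0 < δ := sub_pos.2 hslack
  obtain ⟨M, hM⟩ := exists_measure_inter_setOf_le_ne_zero (μ := volume) (s := Ioc 0 W)
    (by simp [hW]) (interference h p k)
  -- the hypotheses of `prod_lt_prod_of_sub_le_of_add_le` for `η = B ε` and the gain `Δ` of user `k`
  have hsmall : ∀ᶠ ε in 𝓝[>] 0, 2 * n * (B * ε) ≤ m ∧
      B + 2 * n * B * capacity W h N p k / m < log (1 + δ / ε * hmin / (M + N k)) := by
    have hβ : 0 < δ * hmin / (M + N k) := by have := hN k; positivity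
    refine Eventually.and ?_ (((tendsto_log_one_add_div_nhdsGT_zero hβ).congr fun ε => by
      ring_nf).eventually_gt_atTop _)
    exact nhdsWithin_le_nhds (((continuous_const.mul (continuous_const.mul continuous_id)).tendsto'
      0 0 (by simp)).eventually (ge_mem_nhds (hCpos i₀)))
  obtain ⟨S, hSA, hS, hS0, hm, hlog⟩ := exists_subset_volume_real_of_eventually
    (measurableSet_Ioc.inter (measurableSet_le (measurable_interference hmeas hpmeas k)
      measurable_const)) hM hsmall
  have hSW : S ⊆ Ioc 0 W := hSA.trans inter_subset_left
  have hc : 0 ≤ δ / volume.real S := div_nonneg hδ.le hS0.le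
  refine ⟨boost p k S (δ / volume.real S), measurable_boost hpmeas hS,
    fun j x => (hpnn j x).trans (le_boost hc j x), fun i => ?_, ?_⟩
  · rcases eq_or_ne i k with rfl | hik
    · have hpi : IntegrableOn (p i) (Ioc 0 W) := Measure.integrableOn_of_bounded (M := pmax)
        (by simp) (hpmeas i).aestronglyMeasurable
        (ae_of_all _ fun x => (Real.norm_of_nonneg (hpnn i x)).trans_le (hpbd i x))
      rw [integral_boost_self hW.le hS hSW hpi, div_mul_cancel₀ _ hS0.ne', add_sub_cancel]
    · rw [boost_of_ne hik]; exact hfeas i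
  rw [gt_iff_lt, Finset.prod_mul_distrib, Finset.prod_mul_distrib]
  refine mul_lt_mul_of_pos_left (prod_lt_prod_of_sub_le_of_add_le (hCpos i₀) hi₀
    (fun i _ => capacity_sub_le_capacity_boost hW.le hmeas hnn hN hpmeas hpnn hpbd hhmax hS hSW hc
      (hB i))
    (capacity_add_le_capacity_boost_self hW.le hmeas hnn hN hpmeas hpnn hpbd hhmax hS hSW hc
      hhmin.le (fun x => (hgain k x).1) (fun x hx => (hSA hx).2) (hB k))
    (mul_nonneg hB0 hS0.le) (by simpa using hm) ?_) (Finset.prod_pos fun i _ => hω i)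
  have := (div_lt_iff₀' (hCpos i₀)).1 (lt_sub_iff_add_lt'.2 hlog)
  rw [Fintype.card_fin]
  calc 2 * n * (B * volume.real S) * capacity W h N p k
      = 2 * n * B * capacity W h N p k * volume.real S := by ring
    _ < _ := mul_lt_mul_of_pos_right this hS0
    _ = _ := by ring

/-- for the weighted-product objective, any feasible PSD profile with
positive capacities in which some user `k` does not use its maximum power can be
strictly improved by another feasible PSD profile. -/
theorem max_power_weighted_product {n : ℕ} (W : ℝ) (hW : 0 < W)
    (h : Fin n → Fin n → ℝ → ℝ)
    (hmeas : ∀ j i, Measurable (h j i))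
    (hnn : ∀ j i x, 0 ≤ h j i x)
    (N P ω : Fin n → ℝ)
    (hN : ∀ i, 0 < N i) (hP : ∀ i, 0 < P i) (hω : ∀ i, 0 < ω i)
    (pmax hmax hmin : ℝ)
    (hhmin : 0 < hmin)
    (hgain : ∀ (i : Fin n) (x : ℝ), hmin ≤ h i i x ∧ h i i x ≤ hmax)
    (p : Fin n → ℝ → ℝ)
    (hpmeas : ∀ i, Measurable (p i))
    (hpnn : ∀ i x, 0 ≤ p i x)
    (hpbd : ∀ i x, p i x ≤ pmax)
    (hph : 0 < pmax * hmax)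
    (hCpos : ∀ i, 0 < capacity W h N p i)
    (k : Fin n)
    (hfeas : ∀ i, (∫ x in (0:ℝ)..W, p i x) ≤ P i)
    (hslack : (∫ x in (0:ℝ)..W, p k x) < P k) :
    ∃ q : Fin n → ℝ → ℝ,
      (∀ i, Measurable (q i)) ∧
      (∀ i x, 0 ≤ q i x) ∧
      (∀ i, (∫ x in (0:ℝ)..W, q i x) ≤ P i) ∧
      ∏ i, ω i * capacity W h N q i > ∏ i, ω i * capacity W h N p i :=
  max_power_weighted_product_general W hW h hmeas hnn N P ω hN hω pmax hmax hmin hhmin hgain p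
    hpmeas hpnn hpbd hCpos k hfeas hslack
end

section
/- When two users in flat channels split the band [0,W] into disjoint pieces of sizes yW and (1−y)W and each spreads its maximum power uniformly over its piece, the total capacity C(y) = yW·log(1 + P_1 h_{11}/(y W N_1)) + (1−y)W·log(1 + P_2 h_{22}/((1−y) W N_2)) satisfies, for every y ∈ (0,1), C(y) ≤ W·log(1 + P_1 h_{11}/(W N_1) + P_2 h_{22}/(W N_2)), with equality if and only if y = N_2 P_1 h_{11} / (N_1 P_2 h_{22} + N_2 P_1 h_{11}); i.e., the maximum is achieved exactly when the spectrum is divided in the ratio N_2 P_1 h_{11} : N_1 P_2 h_{22}. -/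
open Real

/-!
With `a = P₁h₁₁/(WN₁)` and `b = P₂h₂₂/(WN₂)` the capacity is `W (y log u + (1 - y) log v)`
for `u = 1 + a/y` and `v = 1 + b/(1 - y)`, and `y u + (1 - y) v = 1 + a + b` for every `y`.
Strict concavity of `log` bounds the capacity by `W log (1 + a + b)`, with equality exactly
when `u = v`, i.e. when `a (1 - y) = b y`.
-/

theorem StrictConcaveOn.smul_add_smul_eq_map_iff {𝕜 E β : Type*} [Semiring 𝕜] [PartialOrder 𝕜]
    [AddCommMonoid E] [Module 𝕜 E] [AddCommMonoid β] [PartialOrder β] [Module 𝕜 β]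
    {s : Set E} {f : E → β} (hf : StrictConcaveOn 𝕜 s f) {x y : E} (hx : x ∈ s) (hy : y ∈ s)
    {a b : 𝕜} (ha : 0 < a) (hb : 0 < b) (hab : a + b = 1) :
    a • f x + b • f y = f (a • x + b • y) ↔ x = y := by
  refine ⟨fun h => ?_, fun h => ?_⟩
  · by_contra hxy
    exact (hf.2 hx hy hxy ha hb hab).ne h
  · rw [h, Convex.combo_self hab, Convex.combo_self hab]

section SplitLog

variable {a b y : ℝ}

theorem div_eq_div_one_sub_iff (hy0 : 0 < y) (hy1 : y < 1) (hab : a + b ≠ 0) :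
    a / y = b / (1 - y) ↔ y = a / (a + b) := by
  rw [div_eq_div_iff hy0.ne' (sub_ne_zero.2 hy1.ne'), eq_div_iff hab]
  constructor <;> intro h <;> linarith

theorem mul_one_add_div_add_mul_one_add_div (hy0 : 0 < y) (hy1 : y < 1) :
    y * (1 + a / y) + (1 - y) * (1 + b / (1 - y)) = 1 + a + b := by
  have : 1 - y ≠ 0 := sub_ne_zero.2 hy1.ne'
  field_simp
  ring

theorem mul_log_one_add_div_add_mul_log_le (ha : 0 ≤ a) (hb : 0 ≤ b) (hy0 : 0 < y)
    (hy1 : y < 1) :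
    y * log (1 + a / y) + (1 - y) * log (1 + b / (1 - y)) ≤ log (1 + a + b) := by
  have hy1' : 0 < 1 - y := sub_pos.2 hy1
  have hu : 1 + a / y ∈ Set.Ioi 0 := Set.mem_Ioi.2 (by positivity)
  have hv : 1 + b / (1 - y) ∈ Set.Ioi 0 := Set.mem_Ioi.2 (by positivity)
  rw [← mul_one_add_div_add_mul_one_add_div (a := a) (b := b) hy0 hy1]
  exact strictConcaveOn_log_Ioi.concaveOn.2 hu hv hy0.le hy1'.le (by ring)

theorem mul_log_one_add_div_add_mul_log_eq_iff (ha : 0 ≤ a) (hb : 0 ≤ b) (hab : 0 < a + b)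
    (hy0 : 0 < y) (hy1 : y < 1) :
    y * log (1 + a / y) + (1 - y) * log (1 + b / (1 - y)) = log (1 + a + b) ↔
      y = a / (a + b) := by
  have hy1' : 0 < 1 - y := sub_pos.2 hy1
  rw [← mul_one_add_div_add_mul_one_add_div (a := a) (b := b) hy0 hy1,
    ← div_eq_div_one_sub_iff hy0 hy1 hab.ne']
  have hu : 1 + a / y ∈ Set.Ioi 0 := Set.mem_Ioi.2 (by positivity)
  have hv : 1 + b / (1 - y) ∈ Set.Ioi 0 := Set.mem_Ioi.2 (by positivity)
  exact (strictConcaveOn_log_Ioi.smul_add_smul_eq_map_iff hu hv hy0 hy1' (by ring)).trans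
    (add_right_inj 1)

end SplitLog

/-- with a disjoint split of the band into pieces of sizes `yW` and
`(1−y)W` and uniform maximum-power PSDs, the total capacity
`C(y) = yW·log(1 + P₁h₁₁/(yWN₁)) + (1−y)W·log(1 + P₂h₂₂/((1−y)WN₂))` is at most
`W·log(1 + P₁h₁₁/(WN₁) + P₂h₂₂/(WN₂))` for every `y ∈ (0,1)`, with equality iff
`y = N₂P₁h₁₁/(N₁P₂h₂₂ + N₂P₁h₁₁)`. -/
theorem disjoint_split_optimal_ratio
    (W P1 P2 h11 h22 N1 N2 : ℝ)
    (hW : 0 < W) (hP1 : 0 < P1) (hP2 : 0 < P2)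
    (hh11 : 0 < h11) (hh22 : 0 < h22)
    (hN1 : 0 < N1) (hN2 : 0 < N2)
    (y : ℝ) (hy : y ∈ Set.Ioo (0:ℝ) 1) :
    y * W * Real.log (1 + P1 * h11 / (y * W * N1)) +
      (1 - y) * W * Real.log (1 + P2 * h22 / ((1 - y) * W * N2)) ≤
        W * Real.log (1 + P1 * h11 / (W * N1) + P2 * h22 / (W * N2)) ∧
    (y * W * Real.log (1 + P1 * h11 / (y * W * N1)) +
      (1 - y) * W * Real.log (1 + P2 * h22 / ((1 - y) * W * N2)) =
        W * Real.log (1 + P1 * h11 / (W * N1) + P2 * h22 / (W * N2)) ↔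
      y = N2 * P1 * h11 / (N1 * P2 * h22 + N2 * P1 * h11)) := by
  obtain ⟨hy0, hy1⟩ := hy
  set a := P1 * h11 / (W * N1)
  set b := P2 * h22 / (W * N2)
  have ha : 0 < a := by positivity
  have hb : 0 < b := by positivity
  have hcapacity : y * W * log (1 + P1 * h11 / (y * W * N1)) +
      (1 - y) * W * log (1 + P2 * h22 / ((1 - y) * W * N2)) =
        W * (y * log (1 + a / y) + (1 - y) * log (1 + b / (1 - y))) := by
    simp only [a, b, div_div, mul_comm _ y, mul_comm _ (1 - y), ← mul_assoc]
    ring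
  have hratio : a / (a + b) = N2 * P1 * h11 / (N1 * P2 * h22 + N2 * P1 * h11) := by
    simp only [a, b]
    field_simp
    ring
  rw [hcapacity, ← hratio, mul_right_inj' hW.ne']
  exact ⟨mul_le_mul_of_nonneg_left (mul_log_one_add_div_add_mul_log_le ha.le hb.le hy0 hy1) hW.le,
    mul_log_one_add_div_add_mul_log_eq_iff ha.le hb.le (by positivity) hy0 hy1⟩
end

section
/- Suppose two users in flat channels both spread their maximum powers uniformly over a common band of size s, so that user i has constant PSD P_i/s there. Then the total capacity equals g(s) = s·log(1 + P_1 h_{11}/(P_2 h_{21} + s N_1)) + s·log(1 + P_2 h_{22}/(P_1 h_{12} + s N_2)), and g is strictly increasing on (0,∞). Consequently, over common bands of size s ≤ W the total capacity is maximized at s = W, where it equals W·log(1 + P_1 h_{11}/(P_2 h_{21} + W N_1)) + W·log(1 + P_2 h_{22}/(P_1 h_{12} + W N_2)). -/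
open Real

/-!
After the substitution `σᵢ = Pᵢ / s`, each user's rate is `s ↦ s * log (1 + a / (b + s * c))`
with `a > 0`, `b ≥ 0`, `c > 0`. Its derivative is `log (1 + x) - (s c / (b + s c)) · x / (1 + x)`
with `x = a / (b + s c)`, which is positive because `x / (1 + x) < log (1 + x)` and
`s c / (b + s c) ≤ 1`. So both rates, and hence their sum, increase strictly with `s`.
-/

theorem Real.div_one_add_lt_log_one_add {x : ℝ} (hx : 0 < x) : x / (1 + x) < log (1 + x) :=
  calc x / (1 + x) ≤ 2 * x / (x + 2) := by
        rw [div_le_div_iff₀ (by positivity) (by positivity)]; nlinarith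
    _ < log (1 + x) := lt_log_one_add_of_pos hx

theorem div_mul_div_mul_add_eq {p q h k n s : ℝ} (hs : s ≠ 0) :
    p / s * h / (q / s * k + n) = p * h / (q * k + s * n) := by
  rw [← mul_div_mul_left _ _ hs]
  congr 1 <;> field_simp

section

variable {a b c : ℝ}

theorem hasDerivAt_mul_log_one_add_div {s : ℝ} (hD : b + s * c ≠ 0) (hDa : b + s * c + a ≠ 0) :
    HasDerivAt (fun s => s * log (1 + a / (b + s * c)))
      (log (1 + a / (b + s * c)) - s * c * a / ((b + s * c) * (b + s * c + a))) s := by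
  have hlog : 1 + a / (b + s * c) ≠ 0 := by
    rw [one_add_div hD]; exact div_ne_zero hDa hD
  have hD' : HasDerivAt (fun s => b + s * c) c s := by
    simpa using ((hasDerivAt_id s).mul_const c).const_add b
  have hquot : HasDerivAt (fun s => 1 + a / (b + s * c)) (a * (-c / (b + s * c) ^ 2)) s := by
    simpa [div_eq_mul_inv] using ((hD'.inv hD).const_mul a).const_add 1
  refine ((hasDerivAt_id' s).fun_mul (hquot.log hlog)).congr_deriv ?_
  field_simp
  ring

theorem strictMonoOn_mul_log_one_add_div (ha : 0 < a) (hb : 0 ≤ b) (hc : 0 < c) :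
    StrictMonoOn (fun s => s * log (1 + a / (b + s * c))) (Set.Ioi 0) := by
  have hD : ∀ s ∈ Set.Ioi (0 : ℝ), 0 < b + s * c := fun s hs =>
    add_pos_of_nonneg_of_pos hb (mul_pos hs hc)
  have hderiv := fun s hs =>
    hasDerivAt_mul_log_one_add_div (a := a) (hD s hs).ne' (by linarith [hD s hs])
  refine strictMonoOn_of_hasDerivWithinAt_pos (convex_Ioi 0)
    (fun s hs => (hderiv s hs).continuousAt.continuousWithinAt)
    (fun s hs => (hderiv s (interior_subset hs)).hasDerivWithinAt) fun s hs => ?_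
  rw [interior_Ioi] at hs
  have hDs := hD s hs
  have hloss : s * c * a / ((b + s * c) * (b + s * c + a)) ≤
      a / (b + s * c) / (1 + a / (b + s * c)) := by
    rw [one_add_div hDs.ne', div_div_div_cancel_right₀ hDs.ne', mul_div_mul_comm]
    refine mul_le_of_le_one_left (by positivity) ?_
    rw [div_le_one hDs]; linarith
  linarith [Real.div_one_add_lt_log_one_add (div_pos ha hDs)]

end

theorem full_overlap_capacity_general
    (W P1 P2 h11 h22 h12 h21 N1 N2 : ℝ)
    (hP1 : 0 < P1) (hP2 : 0 < P2)
    (hh11 : 0 < h11) (hh22 : 0 < h22) (hh12 : 0 ≤ h12) (hh21 : 0 ≤ h21)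
    (hN1 : 0 < N1) (hN2 : 0 < N2) :
    ∃ g : ℝ → ℝ,
      (∀ s : ℝ, 0 < s →
        g s = s * (Real.log (1 + (P1 / s) * h11 / ((P2 / s) * h21 + N1)) +
                   Real.log (1 + (P2 / s) * h22 / ((P1 / s) * h12 + N2)))) ∧
      (∀ s : ℝ, 0 < s →
        g s = s * Real.log (1 + P1 * h11 / (P2 * h21 + s * N1)) +
              s * Real.log (1 + P2 * h22 / (P1 * h12 + s * N2))) ∧
      StrictMonoOn g (Set.Ioi (0:ℝ)) ∧
      (∀ s : ℝ, 0 < s → s ≤ W → g s ≤ g W) ∧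
      g W = W * Real.log (1 + P1 * h11 / (P2 * h21 + W * N1)) +
            W * Real.log (1 + P2 * h22 / (P1 * h12 + W * N2)) := by
  set g : ℝ → ℝ := fun s => s * log (1 + P1 * h11 / (P2 * h21 + s * N1)) +
    s * log (1 + P2 * h22 / (P1 * h12 + s * N2))
  have hmono : StrictMonoOn g (Set.Ioi 0) :=
    (strictMonoOn_mul_log_one_add_div (by positivity) (by positivity) hN1).add
      (strictMonoOn_mul_log_one_add_div (by positivity) (by positivity) hN2)
  refine ⟨g, fun s hs => ?_, fun _ _ => rfl, hmono, fun s hs hsW => ?_, rfl⟩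
  · rw [div_mul_div_mul_add_eq hs.ne', div_mul_div_mul_add_eq hs.ne', mul_add]
  · exact hmono.monotoneOn hs (hs.trans_le hsW) hsW

/-- when both users spread their maximum powers uniformly over a
common band of size `s`, the total capacity equals
`g(s) = s·log(1 + P₁h₁₁/(P₂h₂₁ + sN₁)) + s·log(1 + P₂h₂₂/(P₁h₁₂ + sN₂))`;
`g` is strictly increasing on `(0,∞)`, hence over `0 < s ≤ W` it is maximized at
`s = W`, where it equals the stated expression. -/
theorem full_overlap_capacity
    (W P1 P2 h11 h22 h12 h21 N1 N2 : ℝ)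
    (hW : 0 < W) (hP1 : 0 < P1) (hP2 : 0 < P2)
    (hh11 : 0 < h11) (hh22 : 0 < h22) (hh12 : 0 ≤ h12) (hh21 : 0 ≤ h21)
    (hN1 : 0 < N1) (hN2 : 0 < N2) :
    ∃ g : ℝ → ℝ,
      (∀ s : ℝ, 0 < s →
        g s = s * (Real.log (1 + (P1 / s) * h11 / ((P2 / s) * h21 + N1)) +
                   Real.log (1 + (P2 / s) * h22 / ((P1 / s) * h12 + N2)))) ∧
      (∀ s : ℝ, 0 < s →
        g s = s * Real.log (1 + P1 * h11 / (P2 * h21 + s * N1)) +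
              s * Real.log (1 + P2 * h22 / (P1 * h12 + s * N2))) ∧
      StrictMonoOn g (Set.Ioi (0:ℝ)) ∧
      (∀ s : ℝ, 0 < s → s ≤ W → g s ≤ g W) ∧
      g W = W * Real.log (1 + P1 * h11 / (P2 * h21 + W * N1)) +
            W * Real.log (1 + P2 * h22 / (P1 * h12 + W * N2)) :=
  full_overlap_capacity_general W P1 P2 h11 h22 h12 h21 N1 N2 hP1 hP2 hh11 hh22 hh12 hh21 hN1 hN2
end

section
/- In a partially-overlapping two-user SAPD solution, the shared PSD of user 2 is bounded: σ_2 < max(1, N_2 h_{11}/(N_1 h_{22}))·(P_1 + P_2)/W. Precisely: let S_1, S_2, S_12, c_1, c_2, σ_1, σ_2 be positive reals with W = S_1 + S_2 + S_12, P_1 = S_1(σ_1 + c_1) + S_12 σ_1, P_2 = S_2(σ_2 + c_2) + S_12 σ_2, and c_2 + σ_2 = (c_1 + σ_1)·(N_2 h_{11})/(N_1 h_{22}), where N_1, N_2, h_{11}, h_{22} > 0. Letting ς = N_2 h_{11}/(N_1 h_{22}) and γ = max(ς, 1), it follows that σ_2 < γ(P_1 + P_2)/W. -/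
open Real

/-- in a partially-overlapping two-user solution using maximum
powers, the shared PSD `σ₂` of user 2 satisfies
`σ₂ < max(1, N₂h₁₁/(N₁h₂₂)) · (P₁+P₂)/W`. -/
theorem shared_psd_upper_bound
    (W P1 P2 N1 N2 h11 h22 S1 S2 S12 c1 c2 σ1 σ2 : ℝ)
    (hN1 : 0 < N1) (hN2 : 0 < N2) (hh11 : 0 < h11) (hh22 : 0 < h22)
    (hS1 : 0 < S1) (hS2 : 0 < S2) (hS12 : 0 < S12)
    (hc1 : 0 < c1) (hc2 : 0 < c2) (hσ1 : 0 < σ1) (hσ2 : 0 < σ2)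
    (hW : W = S1 + S2 + S12)
    (hP1 : P1 = S1 * (σ1 + c1) + S12 * σ1)
    (hP2 : P2 = S2 * (σ2 + c2) + S12 * σ2)
    (hratio : c2 + σ2 = (c1 + σ1) * (N2 * h11) / (N1 * h22)) :
    σ2 < max (N2 * h11 / (N1 * h22)) 1 * (P1 + P2) / W := by
  set g := max (N2 * h11 / (N1 * h22)) 1 with hg
  have hW0 : 0 < W := by rw [hW]; linarith
  rw [lt_div_iff₀ hW0]
  have hg1 : (1:ℝ) ≤ g := le_max_right _ _
  have hgs : N2 * h11 / (N1 * h22) ≤ g := le_max_left _ _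
  have hcs : 0 < c1 + σ1 := by linarith
  have hkey : σ2 < g * (c1 + σ1) := by
    have h1 : c2 + σ2 = (c1 + σ1) * (N2 * h11 / (N1 * h22)) := by
      rw [hratio, mul_div_assoc]
    have h2 : (c1 + σ1) * (N2 * h11 / (N1 * h22)) ≤ (c1 + σ1) * g :=
      mul_le_mul_of_nonneg_left hgs (le_of_lt hcs)
    nlinarith
  have hg0 : 0 < g := lt_of_lt_of_le one_pos hg1
  nlinarith [mul_pos hS2 hc2, mul_pos hS1 (sub_pos.mpr hkey),
    mul_pos hS12 hσ2, mul_nonneg (sub_nonneg.mpr hg1) (le_of_lt (mul_pos hS2 (by linarith : (0:ℝ) < σ2 + c2))),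
    mul_nonneg (sub_nonneg.mpr hg1) (le_of_lt (mul_pos hS12 hσ2)),
    mul_pos hg0 (mul_pos hS12 hσ1)]
end

section
/- For all positive reals a_1, a_2, a_3, a_4 and every natural number n ≥ 1, there exists ε with 0 < ε < 1/a_1 such that (1 − a_1 ε)^{n−1}·(1 + a_2 ε·log(1 + a_3/ε) − a_4 ε) > 1. -/
open Real

/-- for positive constants `a₁, a₂, a₃, a₄` and `n ≥ 1`, there is
an `ε ∈ (0, 1/a₁)` with `(1 − a₁ε)^{n−1}(1 + a₂ε·log(1 + a₃/ε) − a₄ε) > 1`. -/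
theorem exists_epsilon_ratio_gt_one
    (a1 a2 a3 a4 : ℝ) (n : ℕ)
    (ha1 : 0 < a1) (ha2 : 0 < a2) (ha3 : 0 < a3) (ha4 : 0 < a4)
    (hn : 1 ≤ n) :
    ∃ ε : ℝ, 0 < ε ∧ ε < 1 / a1 ∧
      (1 - a1 * ε) ^ (n - 1) *
        (1 + a2 * ε * Real.log (1 + a3 / ε) - a4 * ε) > 1 := by
  set K : ℝ := ((n - 1 : ℕ) : ℝ) * a1 with hK
  have hK0 : 0 ≤ K := by positivity
  set M : ℝ := (a4 + 2 * K + 1) / a2 with hM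
  set ε : ℝ := min (min (1 / (2 * a1)) (1 / (2 * (K + 1)))) (a3 / Real.exp M)
    with hεdef
  have hε0 : 0 < ε := by
    refine lt_min (lt_min (by positivity) (by positivity)) (by positivity)
  have hε1 : ε ≤ 1 / (2 * a1) := le_trans (min_le_left _ _) (min_le_left _ _)
  have hε2 : ε ≤ 1 / (2 * (K + 1)) := le_trans (min_le_left _ _) (min_le_right _ _)
  have hε3 : ε ≤ a3 / Real.exp M := min_le_right _ _
  have ha1e : a1 * ε ≤ 1 / 2 := by
    have h := (le_div_iff₀ (by positivity : (0:ℝ) < 2 * a1)).mp hε1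
    nlinarith
  have hKe : K * ε ≤ 1 / 2 := by
    have h := (le_div_iff₀ (by positivity : (0:ℝ) < 2 * (K + 1))).mp hε2
    nlinarith
  have hεlt : ε < 1 / a1 := by
    rw [lt_div_iff₀ ha1]
    nlinarith
  set L : ℝ := Real.log (1 + a3 / ε) with hL
  have hML : M ≤ L := by
    have h1 : ε * Real.exp M ≤ a3 := (le_div_iff₀ (Real.exp_pos M)).mp hε3
    have h2 : Real.exp M ≤ a3 / ε := by
      rw [le_div_iff₀ hε0]; linarith [mul_comm ε (Real.exp M)]
    have h3 : Real.exp M ≤ 1 + a3 / ε := by linarith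
    calc M = Real.log (Real.exp M) := (Real.log_exp M).symm
      _ ≤ L := Real.log_le_log (Real.exp_pos M) h3
  have hD : a4 + 2 * K + 1 ≤ a2 * L := by
    have := (div_le_iff₀ ha2).mp hML
    linarith [mul_comm L a2]
  -- Bernoulli
  have h2le : (-2 : ℝ) ≤ -(a1 * ε) := by linarith
  have hf : 1 - K * ε ≤ (1 - a1 * ε) ^ (n - 1) := by
    have h := one_add_mul_le_pow h2le (n - 1)
    calc 1 - K * ε = 1 + ((n - 1 : ℕ) : ℝ) * (-(a1 * ε)) := by rw [hK]; ring
      _ ≤ (1 + -(a1 * ε)) ^ (n - 1) := h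
      _ = (1 - a1 * ε) ^ (n - 1) := by ring_nf
  set S : ℝ := 1 + a2 * ε * L - a4 * ε with hS
  have hDpos : 0 ≤ a2 * L - a4 := by linarith
  have hSge : 1 ≤ S := by nlinarith
  have hmul : (1 - K * ε) * S ≤ (1 - a1 * ε) ^ (n - 1) * S :=
    mul_le_mul_of_nonneg_right hf (by linarith)
  refine ⟨ε, hε0, hεlt, ?_⟩
  have hinner : 0 < (a2 * L - a4) * (1 - K * ε) - K := by
    have h1 : (2 * K + 1) * (1 - K * ε) ≤ (a2 * L - a4) * (1 - K * ε) :=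
      mul_le_mul_of_nonneg_right (by linarith) (by linarith)
    nlinarith
  have hfinal : 1 < (1 - K * ε) * S := by nlinarith [mul_pos hε0 hinner]
  calc (1 : ℝ) < (1 - K * ε) * S := hfinal
    _ ≤ _ := hmul
end
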